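/- Let c̄^1,...,c̄^N ∈ ℝ^n and let v_D^{SAA}(x) = (1/N) Σ_{k∈[N]} max_{j∈x} c̄^k_j for nonempty x ⊆ [n]. For the ∞-Wasserstein ambiguity set with ℓ_r norm and radius θ, the worst-case distribution for a fixed x, i.e., an optimizer of sup_{ℙ∈ℙ_∞} E_ℙ[max_{j∈x} c̃_j], is given by the discrete distribution placing mass 1/N at points c^k_* where c^k_{*,ℓ} = c̄^k_ℓ + θ for one index ℓ ∈ argmax_{j∈x} c̄^k_j and c^k_{*,j} = c̄^k_j otherwise; its expected value equals v_D^{SAA}(x) + θ. -/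

import Mathlib

/-!
In every scenario the worst case is to raise a maximal coordinate of `c̄^k` on `x` by the whole
budget `θ`: no admissible `c^k` can do better, since `‖c^k - c̄^k‖_r ≤ θ` bounds each coordinate
deviation by `θ`, so `max_{j∈x} c^k_j ≤ max_{j∈x} c̄^k_j + θ`; and the perturbation `θ e_ℓ` has
`ℓ_r` norm exactly `θ` and attains this bound.
-/

/-- The ℓ_r norm on `Fin n → ℝ` for a real exponent `r`. -/
noncomputable def lpNorm {n : ℕ} (r : ℝ) (v : Fin n → ℝ) : ℝ :=
  (∑ j, |v j| ^ r) ^ (1 / r)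

open Finset

lemma abs_le_lpNorm {n : ℕ} {r : ℝ} (hr : 0 < r) (v : Fin n → ℝ) (j : Fin n) :
    |v j| ≤ lpNorm r v := by
  calc |v j| = (|v j| ^ r) ^ (1 / r) := by
        rw [← Real.rpow_mul (abs_nonneg _), mul_one_div_cancel hr.ne', Real.rpow_one]
    _ ≤ (∑ i, |v i| ^ r) ^ (1 / r) := by
        gcongr
        exact single_le_sum (f := fun i => |v i| ^ r) (fun i _ => by positivity) (mem_univ j)

lemma lpNorm_pi_single {n : ℕ} {r : ℝ} (hr : r ≠ 0) (i : Fin n) (a : ℝ) :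
    lpNorm r (Pi.single i a) = |a| := by
  have hsum : ∑ j, |(Pi.single i a : Fin n → ℝ) j| ^ r = |a| ^ r := by
    rw [sum_eq_single i (fun j _ hj => by simp [hj, Real.zero_rpow hr]) (by simp)]
    simp
  rw [lpNorm, hsum, ← Real.rpow_mul (abs_nonneg a), mul_one_div_cancel hr, Real.rpow_one]

lemma sSup_image_eq_of_forall_le {ι α : Type*} [ConditionallyCompleteLattice α] {s : Set ι}
    {f : ι → α} {a : ι} (ha : a ∈ s) (hmax : ∀ j ∈ s, f j ≤ f a) : sSup (f '' s) = f a :=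
  IsGreatest.csSup_eq ⟨Set.mem_image_of_mem f ha, Set.forall_mem_image.2 hmax⟩

lemma sSup_image_add_single_of_forall_le {ι : Type*} [DecidableEq ι] {s : Set ι} {f : ι → ℝ}
    {ℓ : ι} (hℓ : ℓ ∈ s) (hmax : ∀ j ∈ s, f j ≤ f ℓ) {θ : ℝ} (hθ : 0 ≤ θ) :
    sSup ((f + Pi.single ℓ θ) '' s) = f ℓ + θ := by
  refine (sSup_image_eq_of_forall_le hℓ fun j hj => ?_).trans (by simp)
  have hsingle : (Pi.single ℓ θ : ι → ℝ) j ≤ θ := by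
    rw [Pi.single_apply]
    split_ifs <;> simp [hθ]
  simpa using add_le_add (hmax j hj) hsingle

lemma sSup_image_le_add_of_lpNorm_sub_le {n : ℕ} {r : ℝ} (hr : 0 < r) {s : Set (Fin n)}
    {c cbar : Fin n → ℝ} {ℓ : Fin n} (hℓ : ℓ ∈ s) (hmax : ∀ j ∈ s, cbar j ≤ cbar ℓ) {θ : ℝ}
    (hc : lpNorm r (c - cbar) ≤ θ) : sSup (c '' s) ≤ cbar ℓ + θ := by
  refine csSup_le ⟨_, Set.mem_image_of_mem c hℓ⟩ (Set.forall_mem_image.2 fun j hj => ?_)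
  have hdev : c j - cbar j ≤ θ :=
    (le_abs_self _).trans ((abs_le_lpNorm hr (c - cbar) j).trans hc)
  linarith [hmax j hj]

theorem drbcp_d_worst_case_distribution_general (n N : ℕ) (hN : 0 < N)
    (x : Finset (Fin n))
    (cbar : Fin N → Fin n → ℝ) (θ r : ℝ) (hθ : 0 ≤ θ) (hr : 1 ≤ r)
    (ℓ : Fin N → Fin n) (hℓmem : ∀ k, ℓ k ∈ x)
    (hℓmax : ∀ k, ∀ j ∈ x, cbar k j ≤ cbar k (ℓ k))
    (cstar : Fin N → Fin n → ℝ)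
    (hcstar : ∀ k j, cstar k j = if j = ℓ k then cbar k j + θ else cbar k j)
    (vSAA : ℝ)
    (hvSAA : vSAA = (1 / N : ℝ) * ∑ k : Fin N, sSup (cbar k '' ↑x)) :
    (∀ k, lpNorm r (fun j => cstar k j - cbar k j) = θ) ∧
    (1 / N : ℝ) * ∑ k : Fin N, sSup (cstar k '' ↑x) = vSAA + θ ∧
    IsGreatest
      {e : ℝ | ∃ c : Fin N → Fin n → ℝ,
        (∀ k, lpNorm r (fun j => c k j - cbar k j) ≤ θ) ∧
        e = (1 / N : ℝ) * ∑ k : Fin N, sSup (c k '' ↑x)}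
      ((1 / N : ℝ) * ∑ k : Fin N, sSup (cstar k '' ↑x)) := by
  have hr0 : 0 < r := zero_lt_one.trans_le hr
  have hstar : ∀ k, cstar k = cbar k + Pi.single (ℓ k) θ := fun k => funext fun j => by
    rw [hcstar, Pi.add_apply, Pi.single_apply]
    split_ifs <;> simp
  have hsup_bar : ∀ k, sSup (cbar k '' ↑x) = cbar k (ℓ k) :=
    fun k => sSup_image_eq_of_forall_le (hℓmem k) (hℓmax k)
  have hsup_star : ∀ k, sSup (cstar k '' ↑x) = cbar k (ℓ k) + θ := fun k => by
    rw [hstar k]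
    exact sSup_image_add_single_of_forall_le (hℓmem k) (hℓmax k) hθ
  have hfeas : ∀ k, lpNorm r (fun j => cstar k j - cbar k j) = θ := fun k => by
    have hdiff : (fun j => cstar k j - cbar k j) = Pi.single (ℓ k) θ := by
      rw [hstar k]
      exact add_sub_cancel_left _ _
    rw [hdiff, lpNorm_pi_single hr0.ne', abs_of_nonneg hθ]
  refine ⟨hfeas, ?_, ⟨cstar, fun k => (hfeas k).le, rfl⟩, ?_⟩
  · have hN' : (N : ℝ) ≠ 0 := by positivity
    simp only [hvSAA, hsup_star, hsup_bar, sum_add_distrib, sum_const, card_univ,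
      Fintype.card_fin, nsmul_eq_mul]
    field_simp
  · rintro e ⟨c, hc, rfl⟩
    simp only [hsup_star]
    gcongr with k
    exact sSup_image_le_add_of_lpNorm_sub_le hr0 (hℓmem k) (hℓmax k) (hc k)

/-- Worst-case distribution for DRBCP-D at a fixed `x`: perturbing, in
each scenario `k`, one coordinate `ℓ k ∈ argmax_{j∈x} c̄^k_j` by `+θ` gives a feasible
ensemble (`‖c^k_* − c̄^k‖_r = θ`) whose expected bottleneck value `v_D^{SAA}(x) + θ`
is the supremum over the ∞-Wasserstein ambiguity set. -/
theorem drbcp_d_worst_case_distribution (n N : ℕ) (hN : 0 < N)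
    (x : Finset (Fin n)) (hx : x.Nonempty)
    (cbar : Fin N → Fin n → ℝ) (θ r : ℝ) (hθ : 0 ≤ θ) (hr : 1 ≤ r)
    (ℓ : Fin N → Fin n) (hℓmem : ∀ k, ℓ k ∈ x)
    (hℓmax : ∀ k, ∀ j ∈ x, cbar k j ≤ cbar k (ℓ k))
    (cstar : Fin N → Fin n → ℝ)
    (hcstar : ∀ k j, cstar k j = if j = ℓ k then cbar k j + θ else cbar k j)
    (vSAA : ℝ)
    (hvSAA : vSAA = (1 / N : ℝ) * ∑ k : Fin N, sSup (cbar k '' ↑x)) :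
    (∀ k, lpNorm r (fun j => cstar k j - cbar k j) = θ) ∧
    (1 / N : ℝ) * ∑ k : Fin N, sSup (cstar k '' ↑x) = vSAA + θ ∧
    IsGreatest
      {e : ℝ | ∃ c : Fin N → Fin n → ℝ,
        (∀ k, lpNorm r (fun j => c k j - cbar k j) ≤ θ) ∧
        e = (1 / N : ℝ) * ∑ k : Fin N, sSup (c k '' ↑x)}
      ((1 / N : ℝ) * ∑ k : Fin N, sSup (cstar k '' ↑x)) :=
  drbcp_d_worst_case_distribution_general n N hN x cbar θ r hθ hr ℓ hℓmem hℓmax cstar hcstar vSAA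
    hvSAA
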